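/- arXiv:2104.14763 — 3 statements merged into one kernel-verified Lean document; each statement's English description precedes it below -/
import Mathlib

section
/- (Triangle inequality of the geodesic distance at the identity.) For all A, B ∈ SO(3), ∠(A, B) ≤ ∠(A, I₃) + ∠(B, I₃), where I₃ is the 3×3 identity matrix; explicitly, arccos((tr(AᵀB) − 1)/2) ≤ arccos((tr(A) − 1)/2) + arccos((tr(B) − 1)/2). -/
/-!
For `R ∈ SO(3)` put `c R = (tr R - 1) / 2`. Rodrigues' formula gives
`⟪v, R v⟫ ≥ c R * ‖v‖²`, with equality for every `v` orthogonal to the rotation axis, so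
`arccos (c R)` is the largest angle between a vector `v` and its image `R v`. Pick `v ≠ 0`
realizing this maximum for `AᵀB`. Since `A` is an isometry,
`arccos (c (AᵀB)) = ∠(v, AᵀB v) = ∠(A v, B v)`, and the spherical triangle inequality through
`v` bounds this by `∠(A v, v) + ∠(v, B v) ≤ arccos (c A) + arccos (c B)`.
-/

/-- The special orthogonal group SO(3): real 3×3 matrices `R` with `Rᵀ * R = 1` and `det R = 1`. -/
def SO3 (R : Matrix (Fin 3) (Fin 3) ℝ) : Prop :=
  R.transpose * R = 1 ∧ R.det = 1

/-- Action of a 3×3 matrix on ℝ³ (with Euclidean norm) by matrix–vector multiplication. -/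
noncomputable def rotAct (R : Matrix (Fin 3) (Fin 3) ℝ) (v : EuclideanSpace ℝ (Fin 3)) :
    EuclideanSpace ℝ (Fin 3) :=
  Matrix.toEuclideanLin R v

/-- Geodesic distance between two rotations: `∠(X, Y) = |arccos((tr(XᵀY) − 1)/2)|`. -/
noncomputable def geo (X Y : Matrix (Fin 3) (Fin 3) ℝ) : ℝ :=
  |Real.arccos ((Matrix.trace (X.transpose * Y) - 1) / 2)|

open Matrix Real InnerProductGeometry
open scoped RealInnerProductSpace

section rotAct

variable {R : Matrix (Fin 3) (Fin 3) ℝ}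

theorem rotAct_sub (R : Matrix (Fin 3) (Fin 3) ℝ) (x y : EuclideanSpace ℝ (Fin 3)) :
    rotAct R (x - y) = rotAct R x - rotAct R y :=
  map_sub _ x y

theorem rotAct_rotAct (A B : Matrix (Fin 3) (Fin 3) ℝ) (v : EuclideanSpace ℝ (Fin 3)) :
    rotAct A (rotAct B v) = rotAct (A * B) v := by
  simp [rotAct, toLpLin_apply, mulVec_mulVec]

theorem inner_rotAct_rotAct (A B : Matrix (Fin 3) (Fin 3) ℝ) (x y : EuclideanSpace ℝ (Fin 3)) :
    ⟪rotAct A x, rotAct B y⟫ = ⟪x, rotAct (Aᵀ * B) y⟫ := by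
  simp only [rotAct, toLpLin_apply, EuclideanSpace.inner_eq_star_dotProduct, star_trivial,
    ← mulVec_mulVec, mulVec_transpose, ← dotProduct_mulVec]

theorem inner_rotAct_of_orthogonal (hR : Rᵀ * R = 1) (x y : EuclideanSpace ℝ (Fin 3)) :
    ⟪rotAct R x, rotAct R y⟫ = ⟪x, y⟫ := by
  rw [inner_rotAct_rotAct, hR]
  simp [rotAct]

theorem norm_rotAct_of_orthogonal (hR : Rᵀ * R = 1) (v : EuclideanSpace ℝ (Fin 3)) :
    ‖rotAct R v‖ = ‖v‖ := by
  simp only [norm_eq_sqrt_real_inner, inner_rotAct_of_orthogonal hR]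

theorem angle_rotAct_rotAct_of_orthogonal (hR : Rᵀ * R = 1) (x y : EuclideanSpace ℝ (Fin 3)) :
    angle (rotAct R x) (rotAct R y) = angle x y := by
  simp only [angle, inner_rotAct_of_orthogonal hR, norm_rotAct_of_orthogonal hR]

theorem angle_self_rotAct_of_orthogonal (hR : Rᵀ * R = 1) (v : EuclideanSpace ℝ (Fin 3)) :
    angle v (rotAct R v) = arccos (⟪v, rotAct R v⟫ / ‖v‖ ^ 2) := by
  rw [angle, norm_rotAct_of_orthogonal hR, sq]

end rotAct

theorem exists_ne_zero_inner_eq_zero {E : Type*} [NormedAddCommGroup E]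
    [InnerProductSpace ℝ E] [FiniteDimensional ℝ E] (hE : 1 < Module.finrank ℝ E) (a : E) :
    ∃ v ≠ 0, ⟪a, v⟫ = 0 := by
  have hker : LinearMap.ker (innerₛₗ ℝ a) ≠ ⊥ :=
    LinearMap.ker_ne_bot_of_finrank_lt (by rwa [Module.finrank_self])
  obtain ⟨v, hv, hv0⟩ := (Submodule.ne_bot_iff _).mp hker
  exact ⟨v, hv0, hv⟩

namespace SO3

variable {A B R : Matrix (Fin 3) (Fin 3) ℝ}

theorem mul_transpose_self (hR : SO3 R) : R * Rᵀ = 1 :=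
  mul_eq_one_comm.mp hR.1

theorem transpose (hR : SO3 R) : SO3 Rᵀ :=
  ⟨by rw [transpose_transpose, hR.mul_transpose_self], by rw [det_transpose, hR.2]⟩

theorem mul (hA : SO3 A) (hB : SO3 B) : SO3 (A * B) := by
  refine ⟨?_, by rw [det_mul, hA.2, hB.2, one_mul]⟩
  rw [transpose_mul, Matrix.mul_assoc, ← Matrix.mul_assoc Aᵀ, hA.1, Matrix.one_mul, hB.1]

theorem adjugate_eq_transpose (hR : SO3 R) : R.adjugate = Rᵀ := by
  rw [← Matrix.one_mul R.adjugate, ← hR.1, Matrix.mul_assoc, mul_adjugate, hR.2, one_smul,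
    Matrix.mul_one]

def axisVec (R : Matrix (Fin 3) (Fin 3) ℝ) : EuclideanSpace ℝ (Fin 3) :=
  !₂[R 2 1 - R 1 2, R 0 2 - R 2 0, R 1 0 - R 0 1]

/- Rodrigues' formula in disguise: if `R` is the rotation by `θ` about the unit vector `k`, then
`axisVec R = 2 sin θ • k` and both sides equal `4 sin² θ ⟪k, v⟫²`. -/
theorem trace_add_one_mul_eq_inner_axisVec_sq (hR : SO3 R) (v : EuclideanSpace ℝ (Fin 3)) :
    (R.trace + 1) * (2 * ⟪v, rotAct R v⟫ - (R.trace - 1) * ‖v‖ ^ 2) =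
      ⟪axisVec R, v⟫ ^ 2 := by
  have hcols := hR.1
  have hrows := hR.mul_transpose_self
  have hcof := hR.adjugate_eq_transpose
  rw [← Matrix.ext_iff] at hcols hrows
  rw [adjugate_fin_three, ← Matrix.ext_iff] at hcof
  simp only [mul_apply, transpose_apply, Fin.sum_univ_three, Fin.isValue, Fin.forall_fin_succ,
    Fin.succ_zero_eq_one, Fin.succ_one_eq_two, IsEmpty.forall_iff, and_true, one_apply_eq,
    Nat.reduceAdd, ne_eq, zero_ne_one, not_false_eq_true, one_apply_ne, Fin.reduceEq,
    Fin.succ_ne_zero, of_apply, cons_val', cons_val_fin_one, cons_val_zero, cons_val_succ,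
    trace_fin_three, rotAct, toLpLin_apply, EuclideanSpace.inner_eq_star_dotProduct, dotProduct,
    mulVec, Pi.star_apply, star_trivial, EuclideanSpace.norm_sq_eq, norm_eq_abs, sq_abs, axisVec,
    cons_val_one, cons_val] at hcols hrows hcof ⊢
  grind

theorem neg_one_le_trace (hR : SO3 R) : -1 ≤ R.trace := by
  have h i := hR.trace_add_one_mul_eq_inner_axisVec_sq (EuclideanSpace.single i 1)
  have h0 := h 0
  have h1 := h 1
  have h2 := h 2
  simp only [trace_fin_three, Fin.isValue, rotAct, toLpLin_apply, PiLp.ofLp_single, mulVec_single,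
    MulOpposite.op_one, one_smul, EuclideanSpace.inner_eq_star_dotProduct, dotProduct, col_apply,
    Pi.star_apply, star_trivial, Fin.sum_univ_three, Pi.single_eq_same, mul_one, ne_eq,
    one_ne_zero, not_false_eq_true, Pi.single_eq_of_ne, mul_zero, add_zero, Fin.reduceEq,
    PiLp.norm_single, norm_one, one_pow, axisVec, PiLp.single_apply, ite_mul, one_mul, zero_mul,
    Finset.sum_ite_eq', Finset.mem_univ, ↓reduceIte, cons_val_zero, zero_ne_one, zero_add,
    cons_val_one, cons_val] at h0 h1 h2
  rw [trace_fin_three]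
  nlinarith [sq_nonneg (R 2 1 - R 1 2), sq_nonneg (R 0 2 - R 2 0), sq_nonneg (R 1 0 - R 0 1)]

theorem trace_sub_one_div_two_mul_norm_sq_le_inner (hR : SO3 R) (v : EuclideanSpace ℝ (Fin 3)) :
    (R.trace - 1) / 2 * ‖v‖ ^ 2 ≤ ⟪v, rotAct R v⟫ := by
  rcases hR.neg_one_le_trace.lt_or_eq with ht | ht
  · have key := hR.trace_add_one_mul_eq_inner_axisVec_sq v
    have : 0 ≤ 2 * ⟪v, rotAct R v⟫ - (R.trace - 1) * ‖v‖ ^ 2 :=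
      (mul_nonneg_iff_of_pos_left (by linarith)).mp (key ▸ sq_nonneg _)
    linarith
  · -- `tr R = -1`: the bound is `0 ≤ ‖v + R v‖² = 2 ‖v‖² + 2 ⟪v, R v⟫`
    have := norm_add_sq_real v (rotAct R v)
    rw [norm_rotAct_of_orthogonal hR.1, ← ht] at *
    nlinarith [sq_nonneg ‖v + rotAct R v‖]

theorem transpose_eq_self_of_axisVec_eq_zero (h : axisVec R = 0) : Rᵀ = R := by
  have h0 := congr($h 0)
  have h1 := congr($h 1)
  have h2 := congr($h 2)
  simp only [axisVec, Fin.isValue, cons_val_zero, cons_val_one, cons_val, PiLp.zero_apply]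
    at h0 h1 h2
  ext i j
  fin_cases i <;> fin_cases j <;>
    simp only [Fin.zero_eta, Fin.mk_one, Fin.reduceFinMk, Fin.isValue, transpose_apply] <;> linarith

theorem exists_rotAct_eq_neg_of_trace_eq_neg_one (hR : SO3 R) (ht : R.trace = -1) :
    ∃ v ≠ 0, rotAct R v = -v := by
  have haxis : axisVec R = 0 := by
    simpa [ht] using (hR.trace_add_one_mul_eq_inner_axisVec_sq (axisVec R)).symm
  have hsq : R * R = 1 := by
    nth_rw 2 [← transpose_eq_self_of_axisVec_eq_zero haxis]
    exact hR.mul_transpose_self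
  obtain ⟨x, hx⟩ : ∃ x, rotAct R x ≠ x := by
    by_contra! h
    have : R = 1 := toEuclideanLin.injective (LinearMap.ext fun x => by simpa [rotAct] using h x)
    norm_num [this] at ht
  have hinv : rotAct R (rotAct R x) = x := by
    rw [rotAct_rotAct, hsq]
    simp [rotAct]
  refine ⟨rotAct R x - x, sub_ne_zero.mpr hx, ?_⟩
  rw [rotAct_sub, hinv, neg_sub]

theorem exists_inner_rotAct_eq (hR : SO3 R) :
    ∃ v ≠ 0, ⟪v, rotAct R v⟫ = (R.trace - 1) / 2 * ‖v‖ ^ 2 := by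
  by_cases ht : R.trace = -1
  · obtain ⟨v, hv, hRv⟩ := hR.exists_rotAct_eq_neg_of_trace_eq_neg_one ht
    refine ⟨v, hv, ?_⟩
    rw [hRv, inner_neg_right, real_inner_self_eq_norm_sq, ht]
    ring
  · obtain ⟨v, hv, hav⟩ := exists_ne_zero_inner_eq_zero (by simp) (axisVec R)
    refine ⟨v, hv, ?_⟩
    have key := hR.trace_add_one_mul_eq_inner_axisVec_sq v
    rw [hav, zero_pow two_ne_zero, mul_eq_zero, or_iff_right (by contrapose! ht; linarith)] at key
    linarith

theorem angle_rotAct_le (hR : SO3 R) {v : EuclideanSpace ℝ (Fin 3)} (hv : v ≠ 0) :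
    angle v (rotAct R v) ≤ arccos ((R.trace - 1) / 2) := by
  rw [angle_self_rotAct_of_orthogonal hR.1]
  exact arccos_le_arccos
    ((le_div_iff₀ (by positivity)).mpr (hR.trace_sub_one_div_two_mul_norm_sq_le_inner v))

theorem exists_angle_rotAct_eq (hR : SO3 R) :
    ∃ v ≠ 0, angle v (rotAct R v) = arccos ((R.trace - 1) / 2) := by
  obtain ⟨v, hv, h⟩ := hR.exists_inner_rotAct_eq
  refine ⟨v, hv, ?_⟩
  rw [angle_self_rotAct_of_orthogonal hR.1, h, mul_div_cancel_right₀ _ (by positivity)]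

theorem arccos_trace_transpose_mul_le (hA : SO3 A) (hB : SO3 B) :
    arccos (((Aᵀ * B).trace - 1) / 2) ≤
      arccos ((A.trace - 1) / 2) + arccos ((B.trace - 1) / 2) := by
  obtain ⟨v, hv, hAB⟩ := (hA.transpose.mul hB).exists_angle_rotAct_eq
  calc arccos (((Aᵀ * B).trace - 1) / 2) = angle v (rotAct (Aᵀ * B) v) := hAB.symm
    _ = angle (rotAct A v) (rotAct B v) := by
      rw [← angle_rotAct_rotAct_of_orthogonal hA.1, rotAct_rotAct, ← Matrix.mul_assoc,
        hA.mul_transpose_self, Matrix.one_mul]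
    _ ≤ angle (rotAct A v) v + angle v (rotAct B v) := angle_le_angle_add_angle _ _ _
    _ ≤ _ := by
      rw [angle_comm]
      exact add_le_add (hA.angle_rotAct_le hv) (hB.angle_rotAct_le hv)

end SO3

/-- Triangle inequality of the geodesic distance at the identity. -/
theorem stmt5 (A B : Matrix (Fin 3) (Fin 3) ℝ) (hA : SO3 A) (hB : SO3 B) :
    geo A B ≤ geo A 1 + geo B 1 ∧
    Real.arccos ((Matrix.trace (A.transpose * B) - 1) / 2) ≤
      Real.arccos ((Matrix.trace A - 1) / 2) +
        Real.arccos ((Matrix.trace B - 1) / 2) := by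
  have h := hA.arccos_trace_transpose_mul_le hB
  refine ⟨?_, h⟩
  simpa only [geo, Matrix.mul_one, trace_transpose, abs_of_nonneg (arccos_nonneg _)] using h
end

section
/- Let s > 0, R ∈ SO(3), t ∈ ℝ³, and let P_i, P_j, Q_i, Q_j, ε_i, ε_j ∈ ℝ³ satisfy Q_i = s·R·P_i + t + ε_i and Q_j = s·R·P_j + t + ε_j, with P_i ≠ P_j. Then the scale-based invariant I^s_{ij} = ‖Q_i − Q_j‖/‖P_i − P_j‖ satisfies the two-sided bound s − ‖ε_i − ε_j‖/‖P_i − P_j‖ ≤ I^s_{ij} ≤ s + ‖ε_i − ε_j‖/‖P_i − P_j‖. -/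
/-! A correspondence moves the pair difference `Pᵢ - Pⱼ` to `s • R (Pᵢ - Pⱼ) + (εᵢ - εⱼ)`. As `R` is
an isometry, the first summand has norm exactly `s ‖Pᵢ - Pⱼ‖`, so by the reverse triangle inequality
`‖Qᵢ - Qⱼ‖` differs from `s ‖Pᵢ - Pⱼ‖` by at most `‖εᵢ - εⱼ‖`; dividing by `‖Pᵢ - Pⱼ‖` gives the
bound. -/

theorem Matrix.norm_toEuclideanLin_of_mem_unitaryGroup {𝕜 n : Type*} [RCLike 𝕜] [Fintype n]
    [DecidableEq n] {R : Matrix n n 𝕜} (hR : R ∈ unitaryGroup n 𝕜) (v : EuclideanSpace 𝕜 n) :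
    ‖toEuclideanLin R v‖ = ‖v‖ :=
  ContinuousLinearMap.norm_map_of_mem_unitary
    (Unitary.map_mem (toEuclideanCLM (n := n) (𝕜 := 𝕜)) hR) v

theorem abs_norm_add_div_sub_le {E : Type*} [SeminormedAddCommGroup E] {a e : E} {s d : ℝ}
    (hd : 0 < d) (ha : ‖a‖ = s * d) : |‖a + e‖ / d - s| ≤ ‖e‖ / d := by
  have hdiv : ‖a + e‖ / d - s = (‖a + e‖ - ‖a‖) / d := by
    rw [ha, sub_div, mul_div_cancel_right₀ s hd.ne']
  rw [hdiv, abs_div, abs_of_pos hd]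
  gcongr
  simpa using abs_norm_sub_norm_le (a + e) a

theorem sub_eq_smul_rotAct_sub_add_sub {R : Matrix (Fin 3) (Fin 3) ℝ} {s : ℝ}
    {t Pi Pj Qi Qj εi εj : EuclideanSpace ℝ (Fin 3)}
    (hQi : Qi = s • rotAct R Pi + t + εi) (hQj : Qj = s • rotAct R Pj + t + εj) :
    Qi - Qj = s • rotAct R (Pi - Pj) + (εi - εj) := by
  simp only [hQi, hQj, rotAct, map_sub, smul_sub]
  abel

/-- Two-sided bound on the pairwise scale-based invariant. -/
theorem stmt9 (s : ℝ) (hs : 0 < s) (R : Matrix (Fin 3) (Fin 3) ℝ) (hR : SO3 R)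
    (t Pi Pj Qi Qj εi εj : EuclideanSpace ℝ (Fin 3))
    (hQi : Qi = s • rotAct R Pi + t + εi) (hQj : Qj = s • rotAct R Pj + t + εj)
    (hP : Pi ≠ Pj) :
    s - ‖εi - εj‖ / ‖Pi - Pj‖ ≤ ‖Qi - Qj‖ / ‖Pi - Pj‖ ∧
    ‖Qi - Qj‖ / ‖Pi - Pj‖ ≤ s + ‖εi - εj‖ / ‖Pi - Pj‖ := by
  have hPpos : 0 < ‖Pi - Pj‖ := norm_pos_iff.mpr (sub_ne_zero.mpr hP)
  have hRnorm : ‖s • rotAct R (Pi - Pj)‖ = s * ‖Pi - Pj‖ := by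
    rw [norm_smul, Real.norm_of_nonneg hs.le, rotAct,
      Matrix.norm_toEuclideanLin_of_mem_unitaryGroup (Matrix.mem_unitaryGroup_iff'.mpr hR.1)]
  have hbound := abs_norm_add_div_sub_le (e := εi - εj) hPpos hRnorm
  rw [← sub_eq_smul_rotAct_sub_add_sub hQi hQj, abs_sub_le_iff] at hbound
  exact ⟨by linarith [hbound.2], by linarith [hbound.1]⟩
end

section
/- (Constraints on the pairwise scale-based invariants of a 3-COS.) Let s > 0, R ∈ SO(3), t ∈ ℝ³, and let P_i, P_j, P_k ∈ ℝ³ be pairwise distinct with Q_m = s·R·P_m + t + ε_m for m ∈ {i, j, k}. Suppose A ≥ 0 is a noise bound with ‖ε_m‖ ≤ A/2 for each m. Then the scale-based invariants I^s_{ij} = ‖Q_i − Q_j‖/‖P_i − P_j‖ and I^s_{jk} = ‖Q_j − Q_k‖/‖P_j − P_k‖ satisfy | I^s_{ij} − I^s_{jk} | ≤ A·(1/‖P_i − P_j‖ + 1/‖P_j − P_k‖). -/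
/-!
Noise of size at most `A / 2` at each end moves the distance between two corresponding target
points by at most `A` away from `|s| * ‖P_i - P_j‖`, since a rotation preserves distances. Dividing
by `‖P_i - P_j‖`, each scale-based invariant lies within `A / ‖P_i - P_j‖` of `|s|`, and the
triangle inequality through `|s|` bounds the difference of two of them.
-/

open Matrix

theorem Matrix.norm_toEuclideanLin_of_transpose_mul_self {n : Type*} [Fintype n] [DecidableEq n]
    {R : Matrix n n ℝ} (hR : Rᵀ * R = 1) (v : EuclideanSpace ℝ n) :
    ‖toEuclideanLin R v‖ = ‖v‖ := by
  have hU : R ∈ unitaryGroup n ℝ := by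
    rwa [mem_unitaryGroup_iff', star_eq_conjTranspose, conjTranspose_eq_transpose_of_trivial]
  exact ContinuousLinearMap.norm_map_of_mem_unitary
    (Unitary.map_mem (toEuclideanCLM (n := n) (𝕜 := ℝ)) hU) v

theorem abs_div_sub_le_div_of_abs_sub_mul_le {x c d a : ℝ} (hd : 0 < d) (h : |x - c * d| ≤ a) :
    |x / d - c| ≤ a / d := by
  rw [show x / d - c = (x - c * d) / d by field_simp, abs_div, abs_of_pos hd]
  gcongr

section NoisySimilarity

variable {E F : Type*} [NormedAddCommGroup E] [NormedSpace ℝ E]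
  [SeminormedAddCommGroup F] [NormedSpace ℝ F]

theorem abs_norm_sub_sub_abs_mul_norm_sub_le (f : E →ₗᵢ[ℝ] F) (s : ℝ) (p p' : E) (t ε ε' : F) :
    |‖(s • f p + t + ε) - (s • f p' + t + ε')‖ - |s| * ‖p - p'‖| ≤ ‖ε‖ + ‖ε'‖ := by
  have hsim : ‖s • f (p - p')‖ = |s| * ‖p - p'‖ := by
    rw [norm_smul, f.norm_map, Real.norm_eq_abs]
  have hnoise : (s • f p + t + ε) - (s • f p' + t + ε') - s • f (p - p') = ε - ε' := by
    rw [map_sub, smul_sub]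
    abel
  calc |‖(s • f p + t + ε) - (s • f p' + t + ε')‖ - |s| * ‖p - p'‖|
      = |‖(s • f p + t + ε) - (s • f p' + t + ε')‖ - ‖s • f (p - p')‖| := by rw [hsim]
    _ ≤ ‖ε - ε'‖ := by rw [← hnoise]; exact abs_norm_sub_norm_le _ _
    _ ≤ ‖ε‖ + ‖ε'‖ := norm_sub_le _ _

theorem abs_div_norm_sub_sub_abs_le (f : E →ₗᵢ[ℝ] F) {s A : ℝ} {p p' : E} {t ε ε' Q Q' : F}
    (hp : p ≠ p') (hQ : Q = s • f p + t + ε) (hQ' : Q' = s • f p' + t + ε')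
    (hε : ‖ε‖ ≤ A / 2) (hε' : ‖ε'‖ ≤ A / 2) :
    |‖Q - Q'‖ / ‖p - p'‖ - (|s|)| ≤ A / ‖p - p'‖ := by
  subst hQ hQ'
  refine abs_div_sub_le_div_of_abs_sub_mul_le (norm_pos_iff.mpr (sub_ne_zero.mpr hp)) ?_
  linarith [abs_norm_sub_sub_abs_mul_norm_sub_le f s p p' t ε ε']

end NoisySimilarity

theorem stmt10_general (s : ℝ) (R : Matrix (Fin 3) (Fin 3) ℝ) (hR : SO3 R)
    (t Pi Pj Pk Qi Qj Qk εi εj εk : EuclideanSpace ℝ (Fin 3))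
    (hij : Pi ≠ Pj) (hjk : Pj ≠ Pk)
    (hQi : Qi = s • rotAct R Pi + t + εi)
    (hQj : Qj = s • rotAct R Pj + t + εj)
    (hQk : Qk = s • rotAct R Pk + t + εk)
    (A : ℝ)
    (hεi : ‖εi‖ ≤ A / 2) (hεj : ‖εj‖ ≤ A / 2) (hεk : ‖εk‖ ≤ A / 2) :
    |‖Qi - Qj‖ / ‖Pi - Pj‖ - ‖Qj - Qk‖ / ‖Pj - Pk‖| ≤
      A * (1 / ‖Pi - Pj‖ + 1 / ‖Pj - Pk‖) := by
  let f : EuclideanSpace ℝ (Fin 3) →ₗᵢ[ℝ] EuclideanSpace ℝ (Fin 3) :=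
    ⟨toEuclideanLin R, norm_toEuclideanLin_of_transpose_mul_self hR.1⟩
  have hIij := abs_div_norm_sub_sub_abs_le f hij hQi hQj hεi hεj
  have hIjk := abs_div_norm_sub_sub_abs_le f hjk hQj hQk hεj hεk
  calc |‖Qi - Qj‖ / ‖Pi - Pj‖ - ‖Qj - Qk‖ / ‖Pj - Pk‖|
      ≤ |‖Qi - Qj‖ / ‖Pi - Pj‖ - (|s|)| + |(|s|) - ‖Qj - Qk‖ / ‖Pj - Pk‖| := abs_sub_le _ _ _
    _ ≤ A / ‖Pi - Pj‖ + A / ‖Pj - Pk‖ := add_le_add hIij (by rwa [abs_sub_comm])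
    _ = A * (1 / ‖Pi - Pj‖ + 1 / ‖Pj - Pk‖) := by ring

/-- Constraints on the pairwise scale-based invariants of a 3-COS. -/
theorem stmt10 (s : ℝ) (hs : 0 < s) (R : Matrix (Fin 3) (Fin 3) ℝ) (hR : SO3 R)
    (t Pi Pj Pk Qi Qj Qk εi εj εk : EuclideanSpace ℝ (Fin 3))
    (hij : Pi ≠ Pj) (hjk : Pj ≠ Pk) (hik : Pi ≠ Pk)
    (hQi : Qi = s • rotAct R Pi + t + εi)
    (hQj : Qj = s • rotAct R Pj + t + εj)
    (hQk : Qk = s • rotAct R Pk + t + εk)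
    (A : ℝ) (hA : 0 ≤ A)
    (hεi : ‖εi‖ ≤ A / 2) (hεj : ‖εj‖ ≤ A / 2) (hεk : ‖εk‖ ≤ A / 2) :
    |‖Qi - Qj‖ / ‖Pi - Pj‖ - ‖Qj - Qk‖ / ‖Pj - Pk‖| ≤
      A * (1 / ‖Pi - Pj‖ + 1 / ‖Pj - Pk‖) :=
  stmt10_general s R hR t Pi Pj Pk Qi Qj Qk εi εj εk hij hjk hQi hQj hQk A hεi hεj hεk
end
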